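/- For every N ∈ ℕ, f(N) ≥ π(N) + π(N^{1/2}) + π(N^{1/4}) + π(N^{1/7}). In particular, the set A = {p : p prime, N^{1/2} < p ≤ N} ∪ {p, p² : p prime, N^{1/4} < p ≤ N^{1/2}} ∪ {p, p², p⁴ : p prime, N^{1/7} < p ≤ N^{1/4}} ∪ {p³, p⁵, p⁶, p⁷ : p prime, p ≤ N^{1/7}} is a subset of [N] with distinct subset products. -/

import Mathlib

/-- A set of positive integers has *distinct subset products* if any two distinct
finite subsets have distinct products (the empty product is `1`). -/
def DistinctSubsetProds (A : Set ℕ) : Prop :=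
  ∀ B C : Finset ℕ, ↑B ⊆ A → ↑C ⊆ A → ∏ b ∈ B, b = ∏ c ∈ C, c → B = C

/-- `primePi x` is the number of primes `p` with `(p : ℝ) ≤ x`. -/
noncomputable def primePi (x : ℝ) : ℕ := {p : ℕ | p.Prime ∧ (p : ℝ) ≤ x}.ncard

/-- `maxDSP N` is the size of the largest subset of `{1, …, N}` with distinct
subset products. -/
noncomputable def maxDSP (N : ℕ) : ℕ :=
  sSup {k | ∃ A : Finset ℕ, ↑A ⊆ Set.Icc 1 N ∧ DistinctSubsetProds ↑A ∧ A.card = k}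


/-- Erdős' refined example: primes in `(N^{1/2}, N]`; `p, p²` for primes
`p ∈ (N^{1/4}, N^{1/2}]`; `p, p², p⁴` for primes `p ∈ (N^{1/7}, N^{1/4}]`; and
`p³, p⁵, p⁶, p⁷` for primes `p ≤ N^{1/7}`. -/
def erdosExample2 (N : ℕ) : Set ℕ :=
  {n : ℕ | ∃ p : ℕ, p.Prime ∧
    (((N : ℝ) ^ ((1 : ℝ) / 2) < (p : ℝ) ∧ p ≤ N ∧ n = p) ∨
     ((N : ℝ) ^ ((1 : ℝ) / 4) < (p : ℝ) ∧ (p : ℝ) ≤ (N : ℝ) ^ ((1 : ℝ) / 2) ∧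
        (n = p ∨ n = p ^ 2)) ∨
     ((N : ℝ) ^ ((1 : ℝ) / 7) < (p : ℝ) ∧ (p : ℝ) ≤ (N : ℝ) ^ ((1 : ℝ) / 4) ∧
        (n = p ∨ n = p ^ 2 ∨ n = p ^ 4)) ∨
     ((p : ℝ) ≤ (N : ℝ) ^ ((1 : ℝ) / 7) ∧
        (n = p ^ 3 ∨ n = p ^ 5 ∨ n = p ^ 6 ∨ n = p ^ 7)))}

/-!
Every element of `erdosExample2 N` is a prime power `p ^ e`, and the exponents that occur for a
given prime `p` form one of `{1}`, `{1, 2}`, `{1, 2, 4}`, `{3, 5, 6, 7}`, each of which has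
distinct subset sums. The `p`-adic valuation of a product of prime powers is the sum of the
exponents of its `p`-power factors, so two subsets with equal products have, prime by prime, the
same exponent sets, hence coincide. For the count, a prime `p` contributes one element for each
`k ∈ {1, 2, 4, 7}` with `p ≤ N ^ (1 / k)`, i.e. `p ^ k ≤ N`.
-/

open Finset

def DistinctSubsetSums (E : Set ℕ) : Prop :=
  ∀ S T : Finset ℕ, ↑S ⊆ E → ↑T ⊆ E → ∑ s ∈ S, s = ∑ t ∈ T, t → S = T

theorem DistinctSubsetSums.mono {E F : Set ℕ} (hEF : E ⊆ F) (hF : DistinctSubsetSums F) :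
    DistinctSubsetSums E :=
  fun S T hS hT => hF S T (hS.trans hEF) (hT.trans hEF)

theorem distinctSubsetSums_coe_iff (s : Finset ℕ) :
    DistinctSubsetSums ↑s ↔
      ∀ S ∈ s.powerset, ∀ T ∈ s.powerset, ∑ x ∈ S, x = ∑ x ∈ T, x → S = T := by
  simp only [DistinctSubsetSums, coe_subset, mem_powerset]
  exact ⟨fun h S hS T hT => h S T hS hT, fun h S T hS hT => h S hS T hT⟩

theorem DistinctSubsetProds.mono {A B : Set ℕ} (hAB : A ⊆ B) (hB : DistinctSubsetProds B) :
    DistinctSubsetProds A :=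
  fun S T hS hT => hB S T (hS.trans hAB) (hT.trans hAB)

theorem factorization_prod_primePow {B : Finset ℕ} {p : ℕ} (hp : p.Prime)
    (hB : ∀ n ∈ B, ∃ q e, q.Prime ∧ n = q ^ e) :
    (∏ n ∈ B, n).factorization p =
      ∑ e ∈ B.preimage (p ^ ·) (Nat.pow_right_injective hp.two_le).injOn, e := by
  have hne : ∀ n ∈ B, n ≠ 0 := fun n hn => by
    obtain ⟨q, e, hq, rfl⟩ := hB n hn
    exact pow_ne_zero e hq.ne_zero
  rw [Nat.factorization_prod hne, Finsupp.finsetSum_apply]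
  symm
  convert sum_preimage (p ^ ·) B _ (fun n => n.factorization p) ?_ using 2 with e
  · simp [hp.factorization_pow]
  · intro n hn hnp
    obtain ⟨q, e, hq, rfl⟩ := hB n hn
    have hqp : q ≠ p := by rintro rfl; exact hnp ⟨e, rfl⟩
    simp [hq.factorization_pow, hqp]

theorem distinctSubsetProds_of_primePow {A : Set ℕ} (hA : ∀ n ∈ A, ∃ p e, p.Prime ∧ n = p ^ e)
    (hE : ∀ p, p.Prime → DistinctSubsetSums {e | p ^ e ∈ A}) : DistinctSubsetProds A := by
  intro B C hB hC hBC
  have hexp : ∀ p (hp : p.Prime), B.preimage (p ^ ·) (Nat.pow_right_injective hp.two_le).injOn =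
      C.preimage (p ^ ·) (Nat.pow_right_injective hp.two_le).injOn := fun p hp =>
    hE p hp _ _ (fun e he => hB (mem_preimage.1 he)) (fun e he => hC (mem_preimage.1 he)) <| by
      rw [← factorization_prod_primePow hp (fun n hn => hA n (hB hn)),
        ← factorization_prod_primePow hp (fun n hn => hA n (hC hn)), hBC]
  ext n
  by_cases hn : n ∈ A
  · obtain ⟨p, e, hp, rfl⟩ := hA n hn
    simpa using congrArg (e ∈ ·) (hexp p hp)
  · exact iff_of_false (fun h => hn (hB h)) (fun h => hn (hC h))

theorem natCast_le_rpow_one_div_iff {p N k : ℕ} (hk : k ≠ 0) :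
    (p : ℝ) ≤ (N : ℝ) ^ ((1 : ℝ) / k) ↔ p ^ k ≤ N := by
  rw [one_div, Real.le_rpow_inv_iff_of_pos (by positivity) (by positivity) (by positivity),
    Real.rpow_natCast]
  exact_mod_cast Iff.rfl

theorem primePi_eq_card_filter_pow_le {N k : ℕ} (hk : k ≠ 0) :
    primePi ((N : ℝ) ^ ((1 : ℝ) / k)) = #{p ∈ range (N + 1) | p.Prime ∧ p ^ k ≤ N} := by
  rw [primePi, ← Set.ncard_coe_finset]
  congr 1
  ext p
  simp only [natCast_le_rpow_one_div_iff hk, coe_filter, mem_range, Set.mem_ofPred_eq]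
  refine ⟨fun h => ⟨Nat.lt_succ_of_le ?_, h⟩, fun h => h.2⟩
  exact (Nat.le_self_pow hk p).trans h.2

-- The exponents `e` with `p ^ e ∈ erdosExample2 N`; `p ≤ N ^ (1 / k)` is recast as `p ^ k ≤ N`.
def erdosExps (N p : ℕ) : Finset ℕ :=
  if p ^ 7 ≤ N then {3, 5, 6, 7} else if p ^ 4 ≤ N then {1, 2, 4}
  else if p ^ 2 ≤ N then {1, 2} else if p ≤ N then {1} else ∅

theorem mem_erdosExample2_iff {N n : ℕ} :
    n ∈ erdosExample2 N ↔ ∃ p, p.Prime ∧ ∃ e ∈ erdosExps N p, n = p ^ e := by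
  have h2 (p : ℕ) := natCast_le_rpow_one_div_iff (p := p) (N := N) (k := 2) (by norm_num)
  have h4 (p : ℕ) := natCast_le_rpow_one_div_iff (p := p) (N := N) (k := 4) (by norm_num)
  have h7 (p : ℕ) := natCast_le_rpow_one_div_iff (p := p) (N := N) (k := 7) (by norm_num)
  simp only [Nat.cast_ofNat] at h2 h4 h7
  simp only [erdosExample2, Set.mem_ofPred_eq, ← not_le, h2, h4, h7]
  refine exists_congr fun p => and_congr_right fun hp => ?_
  have h74 : p ^ 7 ≤ N → p ^ 4 ≤ N := (Nat.pow_le_pow_right hp.pos (by norm_num)).trans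
  have h42 : p ^ 4 ≤ N → p ^ 2 ≤ N := (Nat.pow_le_pow_right hp.pos (by norm_num)).trans
  have h21 : p ^ 2 ≤ N → p ≤ N := (Nat.le_self_pow two_ne_zero p).trans
  unfold erdosExps
  split_ifs <;>
    simp only [mem_insert, mem_singleton, exists_eq_or_imp, exists_eq_left, pow_one, notMem_empty,
      false_and, exists_false, iff_false] <;>
    omega

theorem ne_zero_of_mem_erdosExps {N p e : ℕ} (he : e ∈ erdosExps N p) : e ≠ 0 := by
  unfold erdosExps at he
  split_ifs at he <;> simp only [mem_insert, mem_singleton, notMem_empty] at he <;> omega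

theorem pow_le_of_mem_erdosExps {N p e : ℕ} (hp : 0 < p) (he : e ∈ erdosExps N p) :
    p ^ e ≤ N := by
  have hmono {a b : ℕ} (hab : a ≤ b) (hb : p ^ b ≤ N) : p ^ a ≤ N :=
    (Nat.pow_le_pow_right hp hab).trans hb
  unfold erdosExps at he
  split_ifs at he with h7 h4 h2 h1 <;> simp only [mem_insert, mem_singleton, notMem_empty] at he
  · rcases he with rfl | rfl | rfl | rfl <;> exact hmono (by norm_num) h7
  · rcases he with rfl | rfl | rfl <;> exact hmono (by norm_num) h4
  · rcases he with rfl | rfl <;> exact hmono (by norm_num) h2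
  · rw [he, pow_one]; exact h1

theorem distinctSubsetSums_erdosExps (N p : ℕ) : DistinctSubsetSums ↑(erdosExps N p) := by
  unfold erdosExps
  split_ifs <;> rw [distinctSubsetSums_coe_iff] <;> decide

theorem card_erdosExps {N p : ℕ} (hp : 0 < p) :
    #(erdosExps N p) = (if p ≤ N then 1 else 0) + (if p ^ 2 ≤ N then 1 else 0) +
      (if p ^ 4 ≤ N then 1 else 0) + (if p ^ 7 ≤ N then 1 else 0) := by
  have h74 : p ^ 7 ≤ N → p ^ 4 ≤ N := (Nat.pow_le_pow_right hp (by norm_num)).trans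
  have h42 : p ^ 4 ≤ N → p ^ 2 ≤ N := (Nat.pow_le_pow_right hp (by norm_num)).trans
  have h21 : p ^ 2 ≤ N → p ≤ N := (Nat.le_self_pow two_ne_zero p).trans
  unfold erdosExps
  split_ifs <;> simp_all

theorem setOf_pow_mem_erdosExample2_subset {N p : ℕ} (hp : p.Prime) :
    {e | p ^ e ∈ erdosExample2 N} ⊆ ↑(erdosExps N p) := by
  intro e he
  obtain ⟨q, hq, f, hf, hpq⟩ := mem_erdosExample2_iff.1 he
  have he0 : e ≠ 0 := by
    rintro rfl
    exact (Nat.one_lt_pow (ne_zero_of_mem_erdosExps hf) hq.one_lt).ne hpq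
  obtain ⟨rfl, rfl⟩ := hp.pow_inj' hq he0 (ne_zero_of_mem_erdosExps hf) hpq
  exact hf

theorem erdosExample2_subset_Icc (N : ℕ) : erdosExample2 N ⊆ Set.Icc 1 N := by
  intro n hn
  obtain ⟨p, hp, e, he, rfl⟩ := mem_erdosExample2_iff.1 hn
  exact ⟨Nat.one_le_pow _ _ hp.pos, pow_le_of_mem_erdosExps hp.pos he⟩

theorem distinctSubsetProds_erdosExample2 (N : ℕ) : DistinctSubsetProds (erdosExample2 N) := by
  refine distinctSubsetProds_of_primePow (fun n hn => ?_) fun p hp =>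
    (distinctSubsetSums_erdosExps N p).mono (setOf_pow_mem_erdosExample2_subset hp)
  obtain ⟨p, hp, e, -, rfl⟩ := mem_erdosExample2_iff.1 hn
  exact ⟨p, e, hp, rfl⟩

theorem card_le_maxDSP {N : ℕ} {A : Finset ℕ} (hA : ↑A ⊆ Set.Icc 1 N)
    (hdsp : DistinctSubsetProds ↑A) : #A ≤ maxDSP N := by
  refine le_csSup ⟨N, ?_⟩ ⟨A, hA, hdsp, rfl⟩
  rintro k ⟨B, hB, -, rfl⟩
  have hBN : B ⊆ Icc 1 N := fun n hn => mem_Icc.2 (hB hn)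
  simpa using card_le_card hBN

theorem sum_card_erdosExps (N : ℕ) :
    ∑ p ∈ range (N + 1) with p.Prime, #(erdosExps N p) =
      primePi N + primePi ((N : ℝ) ^ ((1 : ℝ) / 2)) + primePi ((N : ℝ) ^ ((1 : ℝ) / 4)) +
        primePi ((N : ℝ) ^ ((1 : ℝ) / 7)) := by
  have h1 := primePi_eq_card_filter_pow_le (N := N) (k := 1) one_ne_zero
  have h2 := primePi_eq_card_filter_pow_le (N := N) (k := 2) two_ne_zero
  have h4 := primePi_eq_card_filter_pow_le (N := N) (k := 4) four_ne_zero
  have h7 := primePi_eq_card_filter_pow_le (N := N) (k := 7) (by norm_num)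
  simp only [Nat.cast_one, div_one, Real.rpow_one, pow_one, Nat.cast_ofNat] at h1 h2 h4 h7
  rw [h1, h2, h4, h7, sum_congr rfl fun p hp => card_erdosExps (mem_filter.1 hp).2.pos]
  simp only [sum_add_distrib, sum_boole, filter_filter, Nat.cast_id]

theorem primePi_add_le_maxDSP (N : ℕ) :
    primePi N + primePi ((N : ℝ) ^ ((1 : ℝ) / 2)) + primePi ((N : ℝ) ^ ((1 : ℝ) / 4)) +
      primePi ((N : ℝ) ^ ((1 : ℝ) / 7)) ≤ maxDSP N := by
  set S := {p ∈ range (N + 1) | p.Prime}.sigma (erdosExps N)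
  have hS : ∀ x ∈ S, x.1.Prime ∧ x.2 ∈ erdosExps N x.1 := fun x hx => by
    simp only [S, mem_sigma, mem_filter] at hx
    exact ⟨hx.1.2, hx.2⟩
  have hinj : Set.InjOn (fun x : (_ : ℕ) × ℕ => x.1 ^ x.2) S := by
    rintro ⟨p, e⟩ hpe ⟨q, f⟩ hqf h
    obtain ⟨hp, he⟩ := hS _ hpe
    obtain ⟨hq, hf⟩ := hS _ hqf
    obtain ⟨rfl, rfl⟩ :=
      hp.pow_inj' hq (ne_zero_of_mem_erdosExps he) (ne_zero_of_mem_erdosExps hf) h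
    rfl
  have hsub : ↑(S.image fun x => x.1 ^ x.2) ⊆ erdosExample2 N := by
    intro n hn
    obtain ⟨⟨p, e⟩, hpe, rfl⟩ := mem_image.1 hn
    obtain ⟨hp, he⟩ := hS _ hpe
    exact mem_erdosExample2_iff.2 ⟨p, hp, e, he, rfl⟩
  calc _ = #S := by rw [card_sigma, sum_card_erdosExps]
    _ = #(S.image fun x => x.1 ^ x.2) := (card_image_of_injOn hinj).symm
    _ ≤ maxDSP N := card_le_maxDSP (hsub.trans (erdosExample2_subset_Icc N))
        ((distinctSubsetProds_erdosExample2 N).mono hsub)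

/-- `f(N) ≥ π(N) + π(N^{1/2}) + π(N^{1/4}) + π(N^{1/7})`; in particular the set
`erdosExample2 N` is a subset of `[N]` with distinct subset products. -/
theorem stmt17 (N : ℕ) :
    primePi N + primePi ((N : ℝ) ^ ((1 : ℝ) / 2)) + primePi ((N : ℝ) ^ ((1 : ℝ) / 4)) +
        primePi ((N : ℝ) ^ ((1 : ℝ) / 7)) ≤ maxDSP N ∧
      erdosExample2 N ⊆ Set.Icc 1 N ∧ DistinctSubsetProds (erdosExample2 N) :=
  ⟨primePi_add_le_maxDSP N, erdosExample2_subset_Icc N, distinctSubsetProds_erdosExample2 N⟩
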